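/- Let ω(ξ) = -ξ|ξ|. For k ≥ 1 an integer, let I_k = {ξ ∈ ℝ : 2^(k-1) ≤ |ξ| ≤ 2^(k+1)}. Then for any τ ∈ ℝ and j ≥ 0, the Lebesgue measure of the set {ξ ∈ I_k : |τ - ω(ξ)| ≤ 2^(j+1)} is at most C·2^(j-k) for an absolute constant C. -/
import Mathlib


open MeasureTheory

noncomputable section

/-- Benjamin–Ono dispersion relation. -/
def ω (ξ : ℝ) : ℝ := -ξ * |ξ|

/-- Dyadic frequency annulus. -/
def Idy (k : ℤ) : Set ℝ := {ξ : ℝ | (2 : ℝ) ^ (k - 1) ≤ |ξ| ∧ |ξ| ≤ (2 : ℝ) ^ (k + 1)}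

lemma interval_len_bound (τ ε R : ℝ) (hR : 0 < R) (hε : 0 ≤ ε) :
    Real.sqrt (τ + ε) - max (Real.sqrt (τ - ε)) R ≤ ε / R := by
  set a := max (Real.sqrt (τ - ε)) R with ha
  set b := Real.sqrt (τ + ε) with hb
  by_cases hba : b ≤ a
  · have h0 : 0 ≤ ε / R := div_nonneg hε hR.le
    linarith
  push_neg at hba
  have haR : R ≤ a := le_max_right _ _
  have ha0 : 0 < a := lt_of_lt_of_le hR haR
  have hb0 : 0 < b := lt_trans ha0 hba
  have hb2 : b ^ 2 ≤ τ + ε := by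
    by_cases h : 0 ≤ τ + ε
    · rw [hb, Real.sq_sqrt h]
    · exfalso
      rw [hb] at hb0
      rw [Real.sqrt_eq_zero_of_nonpos (le_of_not_ge h)] at hb0
      exact lt_irrefl 0 hb0
  have ha2 : τ - ε ≤ a ^ 2 := by
    by_cases h : 0 ≤ τ - ε
    · have h1 : Real.sqrt (τ - ε) ≤ a := le_max_left _ _
      nlinarith [Real.sq_sqrt h, Real.sqrt_nonneg (τ - ε)]
    · nlinarith
  have key : (b - a) * (2 * R) ≤ (b - a) * (b + a) :=
    mul_le_mul_of_nonneg_left (by linarith) (by linarith)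
  rw [le_div_iff₀ hR]
  nlinarith [key]

lemma half_measure (τ ε R : ℝ) (hR : 0 < R) (hε : 0 ≤ ε) :
    volume {ξ : ℝ | R ≤ ξ ∧ |τ - ξ ^ 2| ≤ ε} ≤ ENNReal.ofReal (ε / R) := by
  have hsub : {ξ : ℝ | R ≤ ξ ∧ |τ - ξ ^ 2| ≤ ε} ⊆
      Set.Icc (max (Real.sqrt (τ - ε)) R) (Real.sqrt (τ + ε)) := by
    rintro ξ ⟨hξR, habs⟩
    have hξ0 : 0 ≤ ξ := le_trans hR.le hξR
    rw [abs_le] at habs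
    constructor
    · apply max_le _ hξR
      calc Real.sqrt (τ - ε) ≤ Real.sqrt (ξ ^ 2) := Real.sqrt_le_sqrt (by linarith)
        _ = ξ := Real.sqrt_sq hξ0
    · exact Real.le_sqrt_of_sq_le (by linarith)
  refine (measure_mono hsub).trans ?_
  rw [Real.volume_Icc]
  exact ENNReal.ofReal_le_ofReal (interval_len_bound τ ε R hR hε)

lemma half_measure_neg (τ ε R : ℝ) (hR : 0 < R) (hε : 0 ≤ ε) :
    volume {ξ : ℝ | ξ ≤ -R ∧ |τ - ξ ^ 2| ≤ ε} ≤ ENNReal.ofReal (ε / R) := by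
  have hsub : {ξ : ℝ | ξ ≤ -R ∧ |τ - ξ ^ 2| ≤ ε} ⊆
      Set.Icc (-(Real.sqrt (τ + ε))) (-(max (Real.sqrt (τ - ε)) R)) := by
    rintro ξ ⟨hξR, habs⟩
    have hξ0 : 0 ≤ -ξ := by linarith
    rw [abs_le] at habs
    have hsq : ξ ^ 2 = (-ξ) ^ 2 := by ring
    constructor
    · have : -ξ ≤ Real.sqrt (τ + ε) := Real.le_sqrt_of_sq_le (by nlinarith)
      linarith
    · have h1 : Real.sqrt (τ - ε) ≤ -ξ := by
        calc Real.sqrt (τ - ε) ≤ Real.sqrt ((-ξ) ^ 2) := Real.sqrt_le_sqrt (by nlinarith)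
          _ = -ξ := Real.sqrt_sq hξ0
      have h2 : R ≤ -ξ := by linarith
      have := max_le h1 h2
      linarith
  refine (measure_mono hsub).trans ?_
  rw [Real.volume_Icc]
  refine ENNReal.ofReal_le_ofReal ?_
  have := interval_len_bound τ ε R hR hε
  linarith

theorem measure_level_set_bound :
    ∃ C : ℝ, 0 < C ∧ ∀ k : ℤ, 1 ≤ k → ∀ (τ : ℝ) (j : ℕ),
      volume {ξ : ℝ | ξ ∈ Idy k ∧ |τ - ω ξ| ≤ (2 : ℝ) ^ (j + 1)} ≤
        ENNReal.ofReal (C * (2 : ℝ) ^ ((j : ℝ) - (k : ℝ))) := by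
  refine ⟨8, by norm_num, ?_⟩
  intro k hk τ j
  set R : ℝ := (2 : ℝ) ^ (k - 1) with hRdef
  set ε : ℝ := (2 : ℝ) ^ (j + 1) with hεdef
  have hR : 0 < R := by positivity
  have hε : 0 ≤ ε := by positivity
  have hsub : {ξ : ℝ | ξ ∈ Idy k ∧ |τ - ω ξ| ≤ ε} ⊆
      {ξ : ℝ | R ≤ ξ ∧ |(-τ) - ξ ^ 2| ≤ ε} ∪ {ξ : ℝ | ξ ≤ -R ∧ |τ - ξ ^ 2| ≤ ε} := by
    rintro ξ ⟨⟨h1, _⟩, h3⟩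
    rcases lt_trichotomy ξ 0 with hneg | hzero | hpos
    · right
      rw [abs_of_neg hneg] at h1
      refine ⟨by linarith, ?_⟩
      have hω : ω ξ = ξ ^ 2 := by rw [ω, abs_of_neg hneg]; ring
      rwa [hω] at h3
    · exfalso
      rw [hzero, abs_zero] at h1
      linarith
    · left
      rw [abs_of_pos hpos] at h1
      refine ⟨h1, ?_⟩
      have hω : ω ξ = -(ξ ^ 2) := by rw [ω, abs_of_pos hpos]; ring
      rw [hω] at h3
      have habs : |(-τ) - ξ ^ 2| = |τ - -(ξ ^ 2)| := by
        rw [show (-τ) - ξ ^ 2 = -(τ - -(ξ ^ 2)) by ring, abs_neg]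
      rw [habs]
      exact h3
  have hcalc : ε / R + ε / R = 8 * (2 : ℝ) ^ ((j : ℝ) - (k : ℝ)) := by
    rw [hεdef, hRdef, ← Real.rpow_natCast (2 : ℝ) (j + 1), ← Real.rpow_intCast (2 : ℝ) (k - 1)]
    push_cast
    rw [← Real.rpow_sub (by norm_num : (0 : ℝ) < 2),
      show ((j : ℝ) + 1) - ((k : ℝ) - 1) = ((j : ℝ) - (k : ℝ)) + 2 by ring,
      Real.rpow_add (by norm_num : (0 : ℝ) < 2)]
    rw [show ((2 : ℝ) ^ (2 : ℝ)) = 4 by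
      rw [show (2 : ℝ) = ((2 : ℕ) : ℝ) by norm_num, Real.rpow_natCast]; norm_num]
    ring
  calc volume {ξ : ℝ | ξ ∈ Idy k ∧ |τ - ω ξ| ≤ ε}
      ≤ volume ({ξ : ℝ | R ≤ ξ ∧ |(-τ) - ξ ^ 2| ≤ ε} ∪ {ξ : ℝ | ξ ≤ -R ∧ |τ - ξ ^ 2| ≤ ε}) :=
        measure_mono hsub
    _ ≤ volume {ξ : ℝ | R ≤ ξ ∧ |(-τ) - ξ ^ 2| ≤ ε} + volume {ξ : ℝ | ξ ≤ -R ∧ |τ - ξ ^ 2| ≤ ε} :=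
        measure_union_le _ _
    _ ≤ ENNReal.ofReal (ε / R) + ENNReal.ofReal (ε / R) :=
        add_le_add (half_measure _ _ _ hR hε) (half_measure_neg _ _ _ hR hε)
    _ = ENNReal.ofReal (ε / R + ε / R) :=
        (ENNReal.ofReal_add (div_nonneg hε hR.le) (div_nonneg hε hR.le)).symm
    _ = ENNReal.ofReal (8 * (2 : ℝ) ^ ((j : ℝ) - (k : ℝ))) := by rw [hcalc]
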